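/- For every pair (i, i') ∈ A and every nonempty j ∈ F(i) with j ⊄ i ∩ i', the pair (j, ψ(j)) belongs to A \ (O ∪ S); in particular ψ(j) ≠ j, L(j) ≤ −1, and R(j) < −1 − L(j). -/
import Mathlib


/- Finite integer intervals: `none` = empty set, `some (l, r)` with `l ≤ r`
represents the interval {l, ..., r}. -/

namespace RFI

abbrev State := Option (ℤ × ℤ)

/-- The reflection ρ about -1/2: ρ({l, ..., r}) = {-1-r, ..., -1-l}, ρ(∅) = ∅. -/
def rho : State → State
  | none => none
  | some (l, r) => some (-1 - r, -1 - l)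

/-- The set of integers represented by a state. -/
def toSet : State → Set ℤ
  | none => ∅
  | some (l, r) => Set.Icc l r

/-- A state is valid when it is the empty set or a nonempty interval `some (l, r)`,
`l ≤ r`. -/
def IsValid (s : State) : Prop := s = none ∨ ∃ l r : ℤ, l ≤ r ∧ s = some (l, r)

/-- The pair (i, i') belongs to A: i' = ρ(i), and either i = i' = ∅, or i is a
nonempty interval with L(i) ≤ -1 and R(i) ≤ -1 - L(i). -/
def memA (i i' : State) : Prop :=
  i' = rho i ∧
    (i = none ∨ ∃ l r : ℤ, l ≤ r ∧ i = some (l, r) ∧ l ≤ -1 ∧ r ≤ -1 - l)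

/-- `j ∈ F(i)`: j is an integer subinterval of i, including the empty set. -/
def memF (i j : State) : Prop := IsValid j ∧ toSet j ⊆ toSet i

open Classical in
/-- The map ψ : F(i) → F(i'): ψ(j) = j if j = ∅ or j ⊆ i ∩ i', and ψ(j) = ρ(j)
otherwise. -/
noncomputable def psi (i i' j : State) : State :=
  if j = none ∨ toSet j ⊆ toSet i ∩ toSet i' then j else rho j

/-- for (i, i') ∈ A and nonempty j ∈ F(i) not contained in i ∩ i',
the pair (j, ψ(j)) belongs to A \ (O ∪ S); in particular ψ(j) ≠ j, L(j) ≤ -1 and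
R(j) < -1 - L(j). -/
theorem psi_strict (i i' : State) (hA : memA i i') (j : State) (hj : memF i j)
    (hne : j ≠ none) (hns : ¬ toSet j ⊆ toSet i ∩ toSet i') :
    memA j (psi i i' j) ∧ psi i i' j ≠ j ∧
    ∀ l r : ℤ, j = some (l, r) → l ≤ -1 ∧ r < -1 - l := by
  obtain ⟨hv, hsub⟩ := hj
  obtain ⟨l0, r0, hl0r0, rfl⟩ : ∃ l0 r0 : ℤ, l0 ≤ r0 ∧ j = some (l0, r0) := by
    rcases hv with h | ⟨l0, r0, h1, h2⟩
    · exact absurd h hne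
    · exact ⟨l0, r0, h1, h2⟩
  obtain ⟨hii', hi⟩ := hA
  obtain ⟨l, r, hlr, rfl, hl, hr⟩ : ∃ l r : ℤ, l ≤ r ∧ i = some (l, r) ∧
      l ≤ -1 ∧ r ≤ -1 - l := by
    rcases hi with h | h
    · subst h
      exact absurd (hsub (Set.mem_Icc.2 ⟨le_refl l0, hl0r0⟩)) (Set.notMem_empty _)
    · exact h
  subst hii'
  have hsub' : l ≤ l0 ∧ r0 ≤ r := by
    constructor
    · exact (Set.mem_Icc.1 (hsub (Set.mem_Icc.2 ⟨le_refl l0, hl0r0⟩))).1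
    · exact (Set.mem_Icc.1 (hsub (Set.mem_Icc.2 ⟨hl0r0, le_refl r0⟩))).2
  have key : l0 < -1 - r := by
    by_contra h
    push_neg at h
    apply hns
    intro x hx
    simp only [toSet, rho, Set.mem_Icc, Set.mem_inter_iff] at hx ⊢
    omega
  have hpsi : psi (some (l, r)) (rho (some (l, r))) (some (l0, r0)) = rho (some (l0, r0)) := by
    unfold psi
    rw [if_neg]
    push_neg
    exact ⟨fun h => by simp at h, hns⟩
  refine ⟨⟨hpsi, Or.inr ⟨l0, r0, hl0r0, rfl, by omega, by omega⟩⟩, ?_, ?_⟩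
  · rw [hpsi]
    intro h1
    simp only [rho, Option.some.injEq, Prod.mk.injEq] at h1
    omega
  · rintro a b hab
    injection hab with hab
    obtain ⟨rfl, rfl⟩ := Prod.mk.injEq .. ▸ hab
    omega

end RFI
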